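/- Let I ⊂ ℝ be an open interval, a, b ∈ I with a < b, f : I → ℝ a twice differentiable mapping such that f'' is integrable on [a,b], and suppose |f''| belongs to the Godunova-Levin class Q(I). Then |(1/6)·(f(a) + 4·f((a+b)/2) + f(b)) − (1/(b−a))·∫ₐᵇ f(x) dx| ≤ ((b−a)²/2) · [(2/3)·ln(8/9) + 1/6] · (|f''(a)| + |f''(b)|). -/

import Mathlib

open MeasureTheory Set Real

/-- A nonnegative function `g` belongs to the Godunova–Levin class `Q(I)` if for all
`x, y ∈ I` and `l ∈ (0,1)` one has `g (l*x + (1-l)*y) ≤ g x / l + g y / (1-l)`. -/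
def GodunovaLevin (I : Set ℝ) (g : ℝ → ℝ) : Prop :=
  (∀ x ∈ I, 0 ≤ g x) ∧
    ∀ x ∈ I, ∀ y ∈ I, ∀ l : ℝ, 0 < l → l < 1 →
      g (l * x + (1 - l) * y) ≤ g x / l + g y / (1 - l)

/-!
Integrating by parts twice against the Peano kernel `K = simpsonKernel a b` writes the Simpson
error on the left half `[a, (a + b) / 2]` as `∫ K f''`; the right half is the same identity for
the reflection `x ↦ f (a + b - x)`. Taking `λ = (b - x) / (b - a)` in the Godunova–Levin inequality
gives `|f'' x| ≤ |f'' a| (b - a) / (b - x) + |f'' b| (b - a) / (x - a)`, and both weighted kernels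
`|K| (b - a) / (b - x)` and `|K| (b - a) / (x - a)` change sign only at `(2a + b) / 3`, so explicit
antiderivatives give their integrals `(b - a)² (7/144 + log (8/9) / 3)` and `5 (b - a)² / 144`.
-/

open intervalIntegral

theorem integral_mul_deriv_deriv_sub_deriv_deriv_mul {u v : ℝ} {f f' f'' k k' k'' : ℝ → ℝ}
    (hf : ∀ x ∈ uIcc u v, HasDerivAt f (f' x) x)
    (hf' : ∀ x ∈ uIcc u v, HasDerivAt f' (f'' x) x)
    (hk : ∀ x ∈ uIcc u v, HasDerivAt k (k' x) x)
    (hk' : ∀ x ∈ uIcc u v, HasDerivAt k' (k'' x) x)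
    (hint : IntervalIntegrable (fun x => k x * f'' x - k'' x * f x) volume u v) :
    ∫ x in u..v, (k x * f'' x - k'' x * f x) =
      k v * f' v - k' v * f v - (k u * f' u - k' u * f u) :=
  integral_eq_sub_of_hasDerivAt
    (fun x hx => ((hk x hx).mul (hf' x hx)).sub ((hk' x hx).mul (hf x hx)) |>.congr_deriv
      (by ring)) hint

theorem integral_abs_eq_of_hasDerivAt_of_sign_change {φ G : ℝ → ℝ} {u v w : ℝ}
    (huv : u ≤ v) (hvw : v ≤ w) (hG : ∀ x ∈ Icc u w, HasDerivAt G (φ x) x)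
    (hφ : IntervalIntegrable φ volume u w)
    (hpos : ∀ x ∈ Icc u v, 0 ≤ φ x) (hneg : ∀ x ∈ Icc v w, φ x ≤ 0) :
    ∫ x in u..w, |φ x| = 2 * G v - G u - G w := by
  have hsub₁ : uIcc u v ⊆ Icc u w := by rw [uIcc_of_le huv]; exact Icc_subset_Icc_right hvw
  have hsub₂ : uIcc v w ⊆ Icc u w := by rw [uIcc_of_le hvw]; exact Icc_subset_Icc_left huv
  have hφ₁ := hφ.mono_set (hsub₁.trans Icc_subset_uIcc)
  have hφ₂ := hφ.mono_set (hsub₂.trans Icc_subset_uIcc)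
  have hleft : ∫ x in u..v, |φ x| = G v - G u := by
    rw [integral_congr fun x hx => abs_of_nonneg (hpos x (by rwa [uIcc_of_le huv] at hx))]
    exact integral_eq_sub_of_hasDerivAt (fun x hx => hG x (hsub₁ hx)) hφ₁
  have hright : ∫ x in v..w, |φ x| = G v - G w := by
    rw [integral_congr fun x hx => abs_of_nonpos (hneg x (by rwa [uIcc_of_le hvw] at hx)),
      intervalIntegral.integral_neg,
      integral_eq_sub_of_hasDerivAt (fun x hx => hG x (hsub₂ hx)) hφ₂, neg_sub]
  rw [← integral_add_adjacent_intervals hφ₁.abs hφ₂.abs, hleft, hright]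
  ring

section

variable {a b : ℝ}

theorem uIcc_left_half_subset_uIcc : uIcc a ((a + b) / 2) ⊆ uIcc a b := by
  refine uIcc_subset_uIcc_left ?_
  rw [mem_uIcc]
  rcases le_total a b with h | h
  · exact Or.inl ⟨by linarith, by linarith⟩
  · exact Or.inr ⟨by linarith, by linarith⟩

theorem IntervalIntegrable.comp_reflect {g : ℝ → ℝ}
    (hg : IntervalIntegrable g volume a b) :
    IntervalIntegrable (fun x => g (a + b - x)) volume a b := by
  simpa only [add_sub_cancel_left, add_sub_cancel_right] using (hg.comp_sub_left (a + b)).symm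

theorem GodunovaLevin.le_of_mem_Ioo {I : Set ℝ} {g : ℝ → ℝ} {x : ℝ}
    (hg : GodunovaLevin I g) (ha : a ∈ I) (hb : b ∈ I) (hx : x ∈ Ioo a b) :
    g x ≤ g a * ((b - a) / (b - x)) + g b * ((b - a) / (x - a)) := by
  have hba : 0 < b - a := by linarith [hx.1, hx.2]
  have h := hg.2 a ha b hb ((b - x) / (b - a)) (div_pos (by linarith [hx.2]) hba)
    ((div_lt_one hba).2 (by linarith [hx.1]))
  have hx_eq : (b - x) / (b - a) * a + (1 - (b - x) / (b - a)) * b = x := by field_simp; ring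
  have hcompl : 1 - (b - x) / (b - a) = (x - a) / (b - a) := by field_simp; ring
  rwa [hx_eq, hcompl, div_div_eq_mul_div, div_div_eq_mul_div, mul_div_assoc,
    mul_div_assoc] at h

/-- The Peano kernel of Simpson's rule on the left half `[a, (a + b) / 2]`. -/
noncomputable def simpsonKernel (a b x : ℝ) : ℝ := (x - a) * (2 * a + b - 3 * x) / (6 * (b - a))

theorem continuous_simpsonKernel (a b : ℝ) : Continuous (simpsonKernel a b) := by
  unfold simpsonKernel; fun_prop

theorem hasDerivAt_simpsonKernel (a b x : ℝ) :
    HasDerivAt (simpsonKernel a b) ((5 * a + b - 6 * x) / (6 * (b - a))) x :=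
  (((hasDerivAt_id x).sub_const a).mul (((hasDerivAt_id x).const_mul 3).const_sub _)).div_const _
    |>.congr_deriv (by simp only [id_eq]; ring)

theorem hasDerivAt_deriv_simpsonKernel (a b x : ℝ) :
    HasDerivAt (fun x => (5 * a + b - 6 * x) / (6 * (b - a))) (-1 / (b - a)) x :=
  ((hasDerivAt_id x).const_mul 6).const_sub (5 * a + b) |>.div_const (6 * (b - a))
    |>.congr_deriv (by field_simp)

variable {f f' f'' : ℝ → ℝ}

theorem integral_simpsonKernel_mul (hab : a < b)
    (hf : ∀ x ∈ Icc a ((a + b) / 2), HasDerivAt f (f' x) x)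
    (hf' : ∀ x ∈ Icc a ((a + b) / 2), HasDerivAt f' (f'' x) x)
    (hint : IntervalIntegrable f'' volume a ((a + b) / 2)) :
    ∫ x in a..(a + b) / 2, simpsonKernel a b x * f'' x =
      f a / 6 + f ((a + b) / 2) / 3 - (b - a) / 24 * f' ((a + b) / 2)
        - (∫ x in a..(a + b) / 2, f x) / (b - a) := by
  have ham : a ≤ (a + b) / 2 := by linarith
  rw [← uIcc_of_le ham] at hf hf'
  have hKf := hint.continuousOn_mul (continuous_simpsonKernel a b).continuousOn
  have hfint : IntervalIntegrable f volume a ((a + b) / 2) :=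
    ContinuousOn.intervalIntegrable fun x hx => (hf x hx).continuousAt.continuousWithinAt
  have hparts := integral_mul_deriv_deriv_sub_deriv_deriv_mul hf hf'
    (fun x _ => hasDerivAt_simpsonKernel a b x) (fun x _ => hasDerivAt_deriv_simpsonKernel a b x)
    (hKf.sub (hfint.const_mul _))
  have hba : b - a ≠ 0 := by linarith
  have hKa : simpsonKernel a b a = 0 := by simp [simpsonKernel]
  have hKm : simpsonKernel a b ((a + b) / 2) = -(b - a) / 24 := by
    unfold simpsonKernel; field_simp; ring
  have hK'a : (5 * a + b - 6 * a) / (6 * (b - a)) = 1 / 6 := by field_simp; ring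
  have hK'm : (5 * a + b - 6 * ((a + b) / 2)) / (6 * (b - a)) = -1 / 3 := by field_simp; ring
  rw [integral_sub hKf (hfint.const_mul _), intervalIntegral.integral_const_mul,
    hKa, hKm, hK'a, hK'm] at hparts
  linear_combination hparts

theorem simpson_sub_average_eq (hab : a < b)
    (hf : ∀ x ∈ Icc a b, HasDerivAt f (f' x) x)
    (hf' : ∀ x ∈ Icc a b, HasDerivAt f' (f'' x) x)
    (hint : IntervalIntegrable f'' volume a b) :
    1 / 6 * (f a + 4 * f ((a + b) / 2) + f b) - 1 / (b - a) * ∫ x in a..b, f x =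
      (∫ x in a..(a + b) / 2, simpsonKernel a b x * f'' x) +
        ∫ x in a..(a + b) / 2, simpsonKernel a b x * f'' (a + b - x) := by
  have ham : a ≤ (a + b) / 2 := by linarith
  have hmb : (a + b) / 2 ≤ b := by linarith
  have hleft : Icc a ((a + b) / 2) ⊆ Icc a b := Icc_subset_Icc_right hmb
  have hreflect : ∀ x ∈ Icc a ((a + b) / 2), a + b - x ∈ Icc a b :=
    fun x hx => ⟨by linarith [hx.2], by linarith [hx.1]⟩
  have hfc : ContinuousOn f (Icc a b) := fun x hx => (hf x hx).continuousAt.continuousWithinAt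
  have hsplit := integral_add_adjacent_intervals
    ((hfc.mono hleft).intervalIntegrable_of_Icc (μ := volume) ham)
    ((hfc.mono (Icc_subset_Icc_left ham)).intervalIntegrable_of_Icc hmb)
  have hL := integral_simpsonKernel_mul hab (fun x hx => hf x (hleft hx))
    (fun x hx => hf' x (hleft hx)) (hint.mono_set uIcc_left_half_subset_uIcc)
  have hR := integral_simpsonKernel_mul (f := fun x => f (a + b - x))
    (f' := fun x => -f' (a + b - x)) hab
    (fun x hx => (hf _ (hreflect x hx)).comp_const_sub (a + b) x)
    (fun x hx => ((hf' _ (hreflect x hx)).comp_const_sub (a + b) x).neg.congr_deriv (neg_neg _))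
    (hint.comp_reflect.mono_set uIcc_left_half_subset_uIcc)
  have hmid : a + b - (a + b) / 2 = (a + b) / 2 := by ring
  rw [intervalIntegral.integral_comp_sub_left (fun x => f x), hmid, add_sub_cancel_left] at hR
  rw [hL, hR, ← hsplit]
  field_simp
  ring

theorem intervalIntegrable_simpsonKernel_mul_div_sub (hab : a < b) :
    IntervalIntegrable (fun x => simpsonKernel a b x * ((b - a) / (b - x))) volume
      a ((a + b) / 2) := by
  refine ContinuousOn.intervalIntegrable_of_Icc (by linarith) ?_
  unfold simpsonKernel
  exact ContinuousOn.mul (by fun_prop) (continuousOn_const.div (by fun_prop)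
    fun x hx => by linarith [hx.2])

theorem integral_abs_simpsonKernel_mul_div_sub (hab : a < b) :
    ∫ x in a..(a + b) / 2, |simpsonKernel a b x * ((b - a) / (b - x))| =
      (b - a) ^ 2 * (7 / 144 + log (8 / 9) / 3) := by
  set G : ℝ → ℝ := fun x => (x - a) ^ 2 / 4 + (b - a) * (x - a) / 3 +
    (b - a) ^ 2 / 3 * log ((b - x) / (b - a)) with hG_def
  have hba : b - a ≠ 0 := by linarith
  have hG : ∀ x ∈ Icc a ((a + b) / 2),
      HasDerivAt G (simpsonKernel a b x * ((b - a) / (b - x))) x := by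
    intro x hx
    have hbx : b - x ≠ 0 := by linarith [hx.2]
    have hlog := (((hasDerivAt_id x).const_sub b).div_const (b - a)).log
      (div_ne_zero hbx hba)
    have := ((((hasDerivAt_id x).sub_const a).pow 2).div_const 4).add
      ((((hasDerivAt_id x).sub_const a).const_mul (b - a)).div_const 3) |>.add
      (hlog.const_mul ((b - a) ^ 2 / 3))
    refine this.congr_deriv ?_
    simp only [simpsonKernel, id_eq]
    field_simp
    ring
  rw [integral_abs_eq_of_hasDerivAt_of_sign_change (v := (2 * a + b) / 3) (by linarith)
    (by linarith) hG (intervalIntegrable_simpsonKernel_mul_div_sub hab)]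
  · have h1 : (b - (2 * a + b) / 3) / (b - a) = 2 / 3 := by field_simp; ring
    have h2 : (b - (a + b) / 2) / (b - a) = 1 / 2 := by field_simp; ring
    have h89 : log (8 / 9) = 2 * log (2 / 3) - log (1 / 2) := by
      rw [show (8 / 9 : ℝ) = (2 / 3) ^ 2 / (1 / 2) by norm_num,
        log_div (by norm_num) (by norm_num), log_pow, Nat.cast_ofNat]
    simp only [hG_def, h1, h2, div_self hba, log_one, h89]
    ring
  · exact fun x hx => mul_nonneg
      (div_nonneg (mul_nonneg (by linarith [hx.1]) (by linarith [hx.2])) (by linarith))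
      (div_nonneg (by linarith) (by linarith [hx.2]))
  · exact fun x hx => mul_nonpos_of_nonpos_of_nonneg
      (div_nonpos_of_nonpos_of_nonneg
        (mul_nonpos_of_nonneg_of_nonpos (by linarith [hx.1]) (by linarith [hx.1])) (by linarith))
      (div_nonneg (by linarith) (by linarith [hx.2]))

theorem integral_abs_two_mul_add_sub_three_mul_div_six (hab : a ≤ b) :
    ∫ x in a..(a + b) / 2, |(2 * a + b - 3 * x) / 6| = (b - a) ^ 2 * (5 / 144) := by
  rw [integral_abs_eq_of_hasDerivAt_of_sign_change (G := fun x => -(2 * a + b - 3 * x) ^ 2 / 36)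
    (v := (2 * a + b) / 3) (by linarith) (by linarith)
    (fun x _ => (((hasDerivAt_id x).const_mul 3).const_sub _ |>.pow 2 |>.neg.div_const 36
      |>.congr_deriv (by simp only [id_eq]; ring)))
    (Continuous.intervalIntegrable (by fun_prop) _ _)
    (fun x hx => div_nonneg (by linarith [hx.2]) (by norm_num))
    (fun x hx => div_nonpos_of_nonpos_of_nonneg (by linarith [hx.1]) (by norm_num))]
  ring

theorem abs_integral_simpsonKernel_mul_le (hab : a < b) {h : ℝ → ℝ} {A B : ℝ}
    (hh : IntervalIntegrable h volume a ((a + b) / 2))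
    (hbound : ∀ x ∈ Ioo a ((a + b) / 2),
      |h x| ≤ A * ((b - a) / (b - x)) + B * ((b - a) / (x - a))) :
    |∫ x in a..(a + b) / 2, simpsonKernel a b x * h x| ≤
      (b - a) ^ 2 * (A * (7 / 144 + log (8 / 9) / 3) + B * (5 / 144)) := by
  have ham : a ≤ (a + b) / 2 := by linarith
  have hKh := hh.continuousOn_mul (continuous_simpsonKernel a b).continuousOn
  have hφ₁ := (intervalIntegrable_simpsonKernel_mul_div_sub hab).abs
  have hφ₂ : IntervalIntegrable (fun x => |(2 * a + b - 3 * x) / 6|) volume a ((a + b) / 2) :=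
    Continuous.intervalIntegrable (by fun_prop) _ _
  have hpointwise : ∀ x ∈ Ioo a ((a + b) / 2), |simpsonKernel a b x * h x| ≤
      A * |simpsonKernel a b x * ((b - a) / (b - x))| + B * |(2 * a + b - 3 * x) / 6| := by
    intro x hx
    have hxa : 0 < x - a := by linarith [hx.1]
    have hbx : 0 < b - x := by linarith [hx.2]
    -- `simpsonKernel a b x * ((b - a) / (x - a))` without its removable singularity at `a`
    have hslope : (2 * a + b - 3 * x) / 6 = simpsonKernel a b x * ((b - a) / (x - a)) := by
      have hba : b - a ≠ 0 := by linarith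
      unfold simpsonKernel; field_simp [hxa.ne']
    calc |simpsonKernel a b x * h x| = |simpsonKernel a b x| * |h x| := abs_mul _ _
      _ ≤ |simpsonKernel a b x| * (A * ((b - a) / (b - x)) + B * ((b - a) / (x - a))) :=
        mul_le_mul_of_nonneg_left (hbound x hx) (abs_nonneg _)
      _ = _ := by
        rw [hslope, abs_mul, abs_mul, abs_of_pos (div_pos (by linarith) hbx),
          abs_of_pos (div_pos (by linarith) hxa)]
        ring
  calc |∫ x in a..(a + b) / 2, simpsonKernel a b x * h x|
      ≤ ∫ x in a..(a + b) / 2, |simpsonKernel a b x * h x| := abs_integral_le_integral_abs ham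
    _ ≤ ∫ x in a..(a + b) / 2, (A * |simpsonKernel a b x * ((b - a) / (b - x))| +
          B * |(2 * a + b - 3 * x) / 6|) :=
      integral_mono_on_of_le_Ioo ham hKh.abs ((hφ₁.const_mul A).add (hφ₂.const_mul B)) hpointwise
    _ = _ := by
      rw [integral_add (hφ₁.const_mul A) (hφ₂.const_mul B),
        intervalIntegral.integral_const_mul, intervalIntegral.integral_const_mul,
        integral_abs_simpsonKernel_mul_div_sub hab,
        integral_abs_two_mul_add_sub_three_mul_div_six hab.le]
      ring

end

theorem godunova_levin_simpson_ineq_general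
    (I : Set ℝ) (hI' : I.OrdConnected)
    (a b : ℝ) (ha : a ∈ I) (hb : b ∈ I) (hab : a < b)
    (f f' f'' : ℝ → ℝ)
    (hf' : ∀ x ∈ I, HasDerivAt f (f' x) x)
    (hf'' : ∀ x ∈ I, HasDerivAt f' (f'' x) x)
    (hint : IntervalIntegrable f'' volume a b)
    (hQ : GodunovaLevin I (fun x => |f'' x|)) :
    |(1 / 6) * (f a + 4 * f ((a + b) / 2) + f b) - (1 / (b - a)) * ∫ x in a..b, f x|
      ≤ ((b - a) ^ 2 / 2) * ((2 / 3) * Real.log (8 / 9) + 1 / 6) *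
          (|f'' a| + |f'' b|) := by
  have hsub : Icc a b ⊆ I := hI'.out ha hb
  have hL := abs_integral_simpsonKernel_mul_le hab
    (hint.mono_set uIcc_left_half_subset_uIcc)
    fun x hx => hQ.le_of_mem_Ioo ha hb ⟨hx.1, by linarith [hx.2]⟩
  have hR := abs_integral_simpsonKernel_mul_le hab
    (hint.comp_reflect.mono_set uIcc_left_half_subset_uIcc) (A := |f'' b|) (B := |f'' a|)
    fun x hx => by
      have h := hQ.le_of_mem_Ioo ha hb (x := a + b - x)
        ⟨by linarith [hx.2], by linarith [hx.1]⟩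
      rw [show b - (a + b - x) = x - a by ring, show a + b - x - a = b - x by ring] at h
      linarith
  rw [simpson_sub_average_eq hab (fun x hx => hf' x (hsub hx)) (fun x hx => hf'' x (hsub hx))
    hint]
  calc _ ≤ _ := abs_add_le _ _
    _ ≤ _ := add_le_add hL hR
    _ = _ := by ring

theorem godunova_levin_simpson_ineq
    (I : Set ℝ) (hI : IsOpen I) (hI' : I.OrdConnected)
    (a b : ℝ) (ha : a ∈ I) (hb : b ∈ I) (hab : a < b)
    (f f' f'' : ℝ → ℝ)
    (hf' : ∀ x ∈ I, HasDerivAt f (f' x) x)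
    (hf'' : ∀ x ∈ I, HasDerivAt f' (f'' x) x)
    (hint : IntervalIntegrable f'' volume a b)
    (hQ : GodunovaLevin I (fun x => |f'' x|)) :
    |(1 / 6) * (f a + 4 * f ((a + b) / 2) + f b) - (1 / (b - a)) * ∫ x in a..b, f x|
      ≤ ((b - a) ^ 2 / 2) * ((2 / 3) * Real.log (8 / 9) + 1 / 6) *
          (|f'' a| + |f'' b|) :=
  godunova_levin_simpson_ineq_general I hI' a b ha hb hab f f' f'' hf' hf'' hint hQ
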